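/- The functions K₀(s) = (−2 + s·coth(s/2))/(s·sinh(s/2)) and H₀(s,t) = [t(s+t)cosh(s) − s(s+t)cosh(t) + (s−t)(s+t+sinh(s)+sinh(t)−sinh(s+t))] / [s·t·(s+t)·sinh(s/2)·sinh(t/2)·sinh((s+t)/2)²] satisfy, with K̃₀(s) = 4·sinh(s/2)/s·K₀(s) and H̃₀(s,t) = 4·sinh((s+t)/2)/(s+t)·H₀(s,t), the functional identity −(1/2)·H̃₀(s₁,s₂) = (K̃₀(s₂)−K̃₀(s₁))/(s₁+s₂) + (K̃₀(s₁+s₂)−K̃₀(s₂))/s₁ − (K̃₀(s₁+s₂)−K̃₀(s₁))/s₂ for all s₁, s₂ > 0 with s₁ ≠ s₂. -/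

import Mathlib

/-!
Under `E = exp s` the factor `sinh (s/2)` of `K̃₀` cancels, leaving `s coth (s/2) = s (E + 1)/(E - 1)`,
and the denominator of `H̃₀` collapses to
`sinh (s/2) sinh (t/2) sinh ((s+t)/2) = (E - 1)(F - 1)(EF - 1)/(8EF)` with `F = exp t`.
Both sides of the identity thus become rational functions of `s, t, E, F`, which agree.
-/

/-- The one-variable modular curvature function `K₀`. -/
noncomputable def K0 (s : ℝ) : ℝ :=
  (-2 + s * (Real.cosh (s / 2) / Real.sinh (s / 2))) / (s * Real.sinh (s / 2))

/-- The two-variable modular curvature function `H₀`. -/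
noncomputable def H0 (s t : ℝ) : ℝ :=
  (t * (s + t) * Real.cosh s - s * (s + t) * Real.cosh t +
      (s - t) * (s + t + Real.sinh s + Real.sinh t - Real.sinh (s + t))) /
    (s * t * (s + t) * Real.sinh (s / 2) * Real.sinh (t / 2) * Real.sinh ((s + t) / 2) ^ 2)

/-- `K̃₀(s) = 4·(sinh(s/2)/s)·K₀(s)`. -/
noncomputable def Ktilde0 (s : ℝ) : ℝ := 4 * (Real.sinh (s / 2) / s) * K0 s

/-- `H̃₀(s,t) = 4·(sinh((s+t)/2)/(s+t))·H₀(s,t)`. -/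
noncomputable def Htilde0 (s t : ℝ) : ℝ := 4 * (Real.sinh ((s + t) / 2) / (s + t)) * H0 s t

open Real

lemma exp_eq_exp_half_mul_exp_half (x : ℝ) : exp x = exp (x / 2) * exp (x / 2) := by
  rw [← exp_add, add_halves]

lemma two_mul_exp_half_mul_sinh_half (x : ℝ) : 2 * exp (x / 2) * sinh (x / 2) = exp x - 1 := by
  rw [sinh_eq, exp_neg, exp_eq_exp_half_mul_exp_half x]
  field_simp

lemma two_mul_exp_half_mul_cosh_half (x : ℝ) : 2 * exp (x / 2) * cosh (x / 2) = exp x + 1 := by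
  rw [cosh_eq, exp_neg, exp_eq_exp_half_mul_exp_half x]
  field_simp

lemma sinh_half_eq (x : ℝ) : sinh (x / 2) = (exp x - 1) / (2 * exp (x / 2)) := by
  rw [← two_mul_exp_half_mul_sinh_half, mul_div_cancel_left₀ _ (by positivity)]

lemma cosh_half_div_sinh_half (x : ℝ) : cosh (x / 2) / sinh (x / 2) = (exp x + 1) / (exp x - 1) := by
  rw [← two_mul_exp_half_mul_sinh_half, ← two_mul_exp_half_mul_cosh_half,
    mul_div_mul_left _ _ (by positivity)]

lemma sinh_half_mul_sinh_half_mul_sinh_half_add (s t : ℝ) :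
    sinh (s / 2) * sinh (t / 2) * sinh ((s + t) / 2) =
      (exp s - 1) * (exp t - 1) * (exp (s + t) - 1) / (8 * exp (s + t)) := by
  have hexp : exp (s / 2) * exp (t / 2) * exp ((s + t) / 2) = exp (s + t) := by
    rw [← exp_add, ← exp_add]; ring_nf
  rw [sinh_half_eq, sinh_half_eq, sinh_half_eq, div_mul_div_comm, div_mul_div_comm, ← hexp]
  ring

lemma Ktilde0_eq (s : ℝ) : Ktilde0 s = 4 * (s * ((exp s + 1) / (exp s - 1)) - 2) / s ^ 2 := by
  rcases eq_or_ne s 0 with rfl | hs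
  · simp [Ktilde0]
  have hsinh : sinh (s / 2) ≠ 0 := sinh_ne_zero.2 (by simpa using hs)
  rw [Ktilde0, K0, cosh_half_div_sinh_half]
  field_simp
  ring

lemma Htilde0_eq (s t : ℝ) :
    Htilde0 s t = 4 * (t * (s + t) * cosh s - s * (s + t) * cosh t +
      (s - t) * (s + t + sinh s + sinh t - sinh (s + t))) /
      (s * t * (s + t) ^ 2 * (sinh (s / 2) * sinh (t / 2) * sinh ((s + t) / 2))) := by
  rcases eq_or_ne (sinh ((s + t) / 2)) 0 with h | h
  · simp [Htilde0, h]
  rw [Htilde0, H0]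
  field_simp

theorem neg_half_mul_Htilde0_eq {s t : ℝ} (hs : s ≠ 0) (ht : t ≠ 0) (hst : s + t ≠ 0) :
    -(1 / 2) * Htilde0 s t =
      (Ktilde0 t - Ktilde0 s) / (s + t) + (Ktilde0 (s + t) - Ktilde0 t) / s -
        (Ktilde0 (s + t) - Ktilde0 s) / t := by
  have hE : exp s - 1 ≠ 0 := sub_ne_zero.2 ((exp_eq_one_iff s).not.2 hs)
  have hF : exp t - 1 ≠ 0 := sub_ne_zero.2 ((exp_eq_one_iff t).not.2 ht)
  have hEF : exp s * exp t - 1 ≠ 0 := by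
    rw [← exp_add]; exact sub_ne_zero.2 ((exp_eq_one_iff _).not.2 hst)
  rw [Htilde0_eq, sinh_half_mul_sinh_half_mul_sinh_half_add, Ktilde0_eq, Ktilde0_eq, Ktilde0_eq]
  simp only [cosh_eq, sinh_eq, exp_neg, exp_add]
  field_simp
  ring

theorem modular_curvature_functional_identity_general (s₁ s₂ : ℝ)
    (h₁ : 0 < s₁) (h₂ : 0 < s₂) :
    -(1 / 2) * Htilde0 s₁ s₂ =
      (Ktilde0 s₂ - Ktilde0 s₁) / (s₁ + s₂) +
        (Ktilde0 (s₁ + s₂) - Ktilde0 s₂) / s₁ -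
          (Ktilde0 (s₁ + s₂) - Ktilde0 s₁) / s₂ :=
  neg_half_mul_Htilde0_eq h₁.ne' h₂.ne' (add_pos h₁ h₂).ne'

/-- The functional identity relating the two curvature-defining functions of the
modular Gaussian curvature of the noncommutative torus. -/
theorem modular_curvature_functional_identity (s₁ s₂ : ℝ)
    (h₁ : 0 < s₁) (h₂ : 0 < s₂) (hne : s₁ ≠ s₂) :
    -(1 / 2) * Htilde0 s₁ s₂ =
      (Ktilde0 s₂ - Ktilde0 s₁) / (s₁ + s₂) +
        (Ktilde0 (s₁ + s₂) - Ktilde0 s₂) / s₁ -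
          (Ktilde0 (s₁ + s₂) - Ktilde0 s₁) / s₂ :=
  modular_curvature_functional_identity_general s₁ s₂ h₁ h₂
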